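/- Let G be a minimally non-(3,4)-colorable graph with girth at least 5, and let C = u_1 u_2 u_3 u_4 u_5 u_6 u_7 be a 7-cycle in G. Then at least one of the following holds: (a) at most six of the vertices u_1, ..., u_7 are 2-vertices, 5p-vertices, 5s-vertices, or 6p-vertices; (b) at least two of the vertices u_1, ..., u_7 are 5s-vertices; (c) after relabeling the cycle by a rotation or reflection, u_1 is a 5s-vertex, u_2, u_4, u_6 are 2-vertices, and u_3, u_5, u_7 are 6p-vertices. -/

import Mathlib

/-- The degree of a vertex: the number of its neighbors. -/
noncomputable def degN {V : Type*} (G : SimpleGraph V) (v : V) : ℕ :=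
  {w | G.Adj v w}.ncard

/-- `c` is a (3,4)-coloring of `G`: every vertex gets value 3 or 4, and every
vertex with value `i` has at most `i` neighbors with value `i`. -/
def IsColoring34 {V : Type*} (G : SimpleGraph V) (c : V → ℕ) : Prop :=
  (∀ v, c v = 3 ∨ c v = 4) ∧ ∀ v, {w | G.Adj v w ∧ c w = c v}.ncard ≤ c v

/-- `G` is (3,4)-colorable. -/
def Colorable34 {V : Type*} (G : SimpleGraph V) : Prop :=
  ∃ c, IsColoring34 G c

/-- The graph `G − v` obtained by deleting the vertex `v` and its incident edges
(keeping `v` as an isolated vertex, which does not affect (3,4)-colorability). -/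
def deleteVert {V : Type*} (G : SimpleGraph V) (v : V) : SimpleGraph V where
  Adj a b := G.Adj a b ∧ a ≠ v ∧ b ≠ v
  symm := ⟨fun _ _ ⟨h, ha, hb⟩ => ⟨h.symm, hb, ha⟩⟩
  loopless := ⟨fun a ⟨h, _, _⟩ => G.loopless.irrefl a h⟩

/-- `G` is minimally non-(3,4)-colorable. -/
def MinNonColorable34 {V : Type*} (G : SimpleGraph V) : Prop :=
  ¬ Colorable34 G ∧ (∀ v, Colorable34 (deleteVert G v)) ∧
    ∀ e ∈ G.edgeSet, Colorable34 (G.deleteEdges {e})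

/-- `u` is `i`-saturated under the coloring `c` of the graph `G`. -/
def Saturated34 {V : Type*} (G : SimpleGraph V) (c : V → ℕ) (i : ℕ) (u : V) : Prop :=
  c u = i ∧ {w | G.Adj u w ∧ c w = i}.ncard = i

/-- `u` can be recolored: changing the color of `u` to the other color
(`7 - c u` swaps 3 and 4) again yields a (3,4)-coloring of `G`. -/
def Recolorable34 {V : Type*} [DecidableEq V] (G : SimpleGraph V) (c : V → ℕ) (u : V) : Prop :=
  IsColoring34 G (Function.update c u (7 - c u))

/-- The number of 3^+-neighbors of `x` in `G` (neighbors of degree at least 3). -/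
noncomputable def tpn {V : Type*} (G : SimpleGraph V) (x : V) : ℕ :=
  {w | G.Adj x w ∧ 3 ≤ degN G w}.ncard

/-- A 5p-vertex (poor 5-vertex): degree 5 with exactly one 3^+-neighbor. -/
def Is5p {V : Type*} (G : SimpleGraph V) (x : V) : Prop := degN G x = 5 ∧ tpn G x = 1

/-- A 5s-vertex (semi-poor 5-vertex): degree 5 with exactly two 3^+-neighbors. -/
def Is5s {V : Type*} (G : SimpleGraph V) (x : V) : Prop := degN G x = 5 ∧ tpn G x = 2

/-- A 6p-vertex (poor 6-vertex): degree 6 with exactly one 3^+-neighbor. -/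
def Is6p {V : Type*} (G : SimpleGraph V) (x : V) : Prop := degN G x = 6 ∧ tpn G x = 1

/-- `G` has girth at least 5: no 3-cycles and no 4-cycles. -/
def GirthAtLeast5 {V : Type*} (G : SimpleGraph V) : Prop :=
  (∀ a b c : V, G.Adj a b → G.Adj b c → ¬ G.Adj c a) ∧
  (∀ a b c d : V, a ≠ c → b ≠ d →
    G.Adj a b → G.Adj b c → G.Adj c d → ¬ G.Adj d a)


/-!
Let `C` be a 7-cycle on which (a) and (b) fail: all seven vertices are 2-, 5p-, 5s- or
6p-vertices and at most one of them is a 5s-vertex.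

Minimality gives reducible configurations, each refuted by taking a (3,4)-coloring of `G − e` or
`G − v` and recolouring a few vertices next to the deleted element. A vertex of degree at most 2
is never saturated, so it never prevents a neighbour from changing colour; this is what lets the
recolourings pass through poor vertices. In a minimal graph no two vertices of degree `≤ 3` are
adjacent, no two poor vertices are adjacent, a 5p-vertex has no neighbour of degree 5, no 2-vertex
has two neighbours of degree `≤ 5`, and the 7-cycle `5s, 2, 6p, 2, 5p, 2, 6p` does not occur.

Along `C` the 2-vertices and the poor vertices therefore alternate. As 7 is odd, `C` contains a
5s-vertex, and walking around the cycle from it the configurations above leave only `F₇`.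
-/

open Function

section Coloring

variable {V : Type*} {G H : SimpleGraph V} {c : V → ℕ} {i j : ℕ} {a b t u v w x y z : V}

def colorNbrs (G : SimpleGraph V) (c : V → ℕ) (i : ℕ) (t : V) : Set V :=
  {w | G.Adj t w ∧ c w = i}

lemma colorNbrs_mono (h : H ≤ G) : colorNbrs H c i t ⊆ colorNbrs G c i t :=
  fun _ hw => ⟨h hw.1, hw.2⟩

lemma colorNbrs_update_of_not_adj [DecidableEq V] (h : ¬ G.Adj t x) :
    colorNbrs G (update c x j) i t = colorNbrs G c i t := by
  ext w
  rcases eq_or_ne w x with rfl | hw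
  · simp [colorNbrs, h]
  · simp [colorNbrs, update_of_ne hw]

lemma colorNbrs_update_of_ne [DecidableEq V] (hji : j ≠ i) :
    colorNbrs G (update c x j) i t = colorNbrs G c i t \ {x} := by
  ext w
  rcases eq_or_ne w x with rfl | hw
  · simp [colorNbrs, hji]
  · simp [colorNbrs, hw]

lemma colorNbrs_deleteEdges (hxy : x ≠ y) :
    colorNbrs (G.deleteEdges {s(x, y)}) c i x = colorNbrs G c i x \ {y} := by
  ext w
  simp [colorNbrs, SimpleGraph.deleteEdges_adj, hxy, and_right_comm]

lemma deleteVert_le : deleteVert G v ≤ G := fun _ _ h => h.1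

lemma deleteEdges_adj_iff_of_ne (htx : t ≠ x) (hty : t ≠ y) :
    (G.deleteEdges {s(x, y)}).Adj t w ↔ G.Adj t w := by
  simp [SimpleGraph.deleteEdges_adj, htx, hty]

lemma degN_deleteVert_of_adj (h : G.Adj t v) : degN (deleteVert G v) t = degN G t - 1 := by
  have : {w | (deleteVert G v).Adj t w} = {w | G.Adj t w} \ {v} := by
    ext w
    simp [deleteVert, G.ne_of_adj h]
  rw [degN, this, Set.ncard_sdiff_singleton_of_mem (show v ∈ {w | G.Adj t w} from h), degN]

lemma degN_deleteVert_of_not_adj (htv : t ≠ v) (h : ¬ G.Adj t v) :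
    degN (deleteVert G v) t = degN G t := by
  have : {w | (deleteVert G v).Adj t w} = {w | G.Adj t w} := by
    ext w
    exact ⟨fun h => h.1, fun hw => ⟨hw, htv, by rintro rfl; exact h hw⟩⟩
  rw [degN, this, degN]

lemma degN_deleteEdges (h : G.Adj x y) : degN (G.deleteEdges {s(x, y)}) x = degN G x - 1 := by
  have : {w | (G.deleteEdges {s(x, y)}).Adj x w} = {w | G.Adj x w} \ {y} := by
    ext w
    simp [SimpleGraph.deleteEdges_adj, G.ne_of_adj h]
  rw [degN, this, Set.ncard_sdiff_singleton_of_mem (show y ∈ {w | G.Adj x w} from h), degN]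

lemma degN_le_two_of_adj_iff (hv : ∀ w, G.Adj v w ↔ w = x ∨ w = y) : degN G v ≤ 2 := by
  have : {w | G.Adj v w} = {x, y} := by ext w; simp [hv]
  rw [degN, this]
  exact (Set.ncard_insert_le _ _).trans (by simp)

lemma tpn_eq_one_of_is5p_or_is6p (h : Is5p G x ∨ Is6p G x) :
    tpn G x = 1 ∧ 5 ≤ degN G x ∧ degN G x ≤ 6 := by
  rcases h with ⟨hd, ht⟩ | ⟨hd, ht⟩ <;> omega

variable [Finite V]

lemma ncard_colorNbrs_le_degN : (colorNbrs G c i t).ncard ≤ degN G t :=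
  Set.ncard_le_ncard fun _ hw => hw.1

lemma ncard_colorNbrs_add_ncard_colorNbrs (hc : ∀ w, c w = i ∨ c w = j) (hij : i ≠ j) :
    (colorNbrs G c i t).ncard + (colorNbrs G c j t).ncard = degN G t := by
  rw [← Set.ncard_union_eq]
  · congr 1
    ext w
    simp only [colorNbrs, Set.mem_union]
    rcases hc w with h | h <;> simp [h, hij, hij.symm]
  · exact Set.disjoint_left.2 fun w hi hj => hij (hi.2.symm.trans hj.2)

lemma degN_mono (h : H ≤ G) : degN H t ≤ degN G t :=
  Set.ncard_le_ncard fun _ hw => h hw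

lemma not_saturated34_of_degN_lt (h : degN G t < i) : ¬ Saturated34 G c i t :=
  fun hs => (hs.2 ▸ h).not_ge ncard_colorNbrs_le_degN

lemma adj_iff_of_degN_eq_two (hv : degN G v = 2) (hx : G.Adj v x) (hy : G.Adj v y)
    (hxy : x ≠ y) : ∀ w, G.Adj v w ↔ w = x ∨ w = y := by
  have : {w | G.Adj v w} = {x, y} :=
    (Set.eq_of_subset_of_ncard_le (by simp [Set.insert_subset_iff, hx, hy])
      (by rw [Set.ncard_pair hxy]; exact hv.le)).symm
  intro w
  simpa using Set.ext_iff.1 this w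

lemma degN_le_two_of_tpn_eq_one (h : tpn G x = 1) (hy : G.Adj x y) (hy3 : 3 ≤ degN G y) :
    ∀ w, G.Adj x w → w ≠ y → degN G w ≤ 2 := by
  intro w hw hwy
  by_contra! hw3
  exact hwy ((Set.ncard_le_one (Set.toFinite _)).1 h.le w ⟨hw, hw3⟩ y ⟨hy, hy3⟩)

lemma exists_of_tpn_eq_one (h : tpn G x = 1) :
    ∃ z, G.Adj x z ∧ 3 ≤ degN G z ∧ ∀ w, G.Adj x w → w ≠ z → degN G w ≤ 2 := by
  obtain ⟨z, hz⟩ := Set.ncard_eq_one.1 h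
  have hzS : z ∈ {w | G.Adj x w ∧ 3 ≤ degN G w} := hz ▸ rfl
  exact ⟨z, hzS.1, hzS.2, degN_le_two_of_tpn_eq_one h hzS.1 hzS.2⟩

lemma exists_of_tpn_eq_two (h : tpn G x = 2) (hy : G.Adj x y) (hy3 : 3 ≤ degN G y) :
    ∃ z, z ≠ y ∧ G.Adj x z ∧ 3 ≤ degN G z ∧
      ∀ w, G.Adj x w → w ≠ y → w ≠ z → degN G w ≤ 2 := by
  have h1 : ({w | G.Adj x w ∧ 3 ≤ degN G w} \ {y}).ncard = 1 := by
    rw [Set.ncard_sdiff_singleton_of_mem (show y ∈ {w | G.Adj x w ∧ 3 ≤ degN G w} from ⟨hy, hy3⟩)]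
    exact congrArg (· - 1) h
  obtain ⟨z, hz⟩ := Set.ncard_eq_one.1 h1
  have hzS : z ∈ {w | G.Adj x w ∧ 3 ≤ degN G w} \ {y} := hz ▸ rfl
  refine ⟨z, hzS.2, hzS.1.1, hzS.1.2, fun w hw hwy hwz => ?_⟩
  by_contra! hw3
  exact hwz ((Set.ncard_le_one (Set.toFinite _)).1 h1.le w ⟨⟨hw, hw3⟩, hwy⟩ z hzS)

lemma IsColoring34.anti (hc : IsColoring34 G c) (h : H ≤ G) : IsColoring34 H c :=
  ⟨hc.1, fun t => (Set.ncard_le_ncard (colorNbrs_mono h)).trans (hc.2 t)⟩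

lemma IsColoring34.ncard_colorNbrs_of_saturated34 (hc : IsColoring34 G c)
    (hs : Saturated34 G c i t) : (colorNbrs G c (7 - i) t).ncard = degN G t - i := by
  have hi := hs.1 ▸ hc.1 t
  have hp := ncard_colorNbrs_add_ncard_colorNbrs (G := G) (c := c) (t := t)
    (fun w => by rcases hc.1 w with h | h <;> omega) (show i ≠ 7 - i by omega)
  have : (colorNbrs G c i t).ncard = i := hs.2
  omega

lemma isColoring34_of (hval : ∀ w, c w = 3 ∨ c w = 4)
    (h : ∀ t, 3 < degN G t → (colorNbrs G c (c t) t).ncard ≤ c t) : IsColoring34 G c := by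
  refine ⟨hval, fun t => show (colorNbrs G c (c t) t).ncard ≤ c t from ?_⟩
  by_cases ht : 3 < degN G t
  · exact h t ht
  · have : (colorNbrs G c (c t) t).ncard ≤ degN G t := ncard_colorNbrs_le_degN
    rcases hval t with h | h <;> omega

lemma IsColoring34.ncard_le_of_subset_insert {S : Set V} (hc : IsColoring34 H c)
    (hS : S ⊆ insert a (colorNbrs H c (c t) t)) (ha : a ∈ S → ¬ Saturated34 H c (c t) t) :
    S.ncard ≤ c t := by
  by_cases haS : a ∈ S
  · have hlt : (colorNbrs H c (c t) t).ncard < c t :=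
      (hc.2 t).lt_of_ne fun h => ha haS ⟨rfl, h⟩
    have := (Set.ncard_le_ncard hS).trans (Set.ncard_insert_le _ _)
    omega
  · refine (Set.ncard_le_ncard fun w hw => ?_).trans (hc.2 t)
    exact (hS hw).resolve_left (by rintro rfl; exact haS hw)

lemma IsColoring34.of_deleteEdges (hc : IsColoring34 (G.deleteEdges {s(x, y)}) c)
    (hx : c x = c y → ¬ Saturated34 (G.deleteEdges {s(x, y)}) c (c x) x)
    (hy : c x = c y → ¬ Saturated34 (G.deleteEdges {s(x, y)}) c (c y) y) :
    IsColoring34 G c := by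
  refine ⟨hc.1, fun t => ?_⟩
  have key : ∀ a, (∀ w, G.Adj t w → w ≠ a → (G.deleteEdges {s(x, y)}).Adj t w) →
      (a ∈ colorNbrs G c (c t) t → ¬ Saturated34 (G.deleteEdges {s(x, y)}) c (c t) t) →
      (colorNbrs G c (c t) t).ncard ≤ c t := fun a hadj ha =>
    hc.ncard_le_of_subset_insert (fun w ⟨hw, hcw⟩ =>
      (eq_or_ne w a).imp id fun hwa => ⟨hadj w hw hwa, hcw⟩) ha
  rcases eq_or_ne t x with rfl | htx
  · refine key y (fun w hw hwy => ?_) fun h => hx h.2.symm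
    simp [SimpleGraph.deleteEdges_adj, hw, hwy, (G.ne_of_adj hw).symm]
  rcases eq_or_ne t y with rfl | hty
  · refine key x (fun w hw hwx => ?_) fun h => hy h.2
    simp [SimpleGraph.deleteEdges_adj, hw, hwx, (G.ne_of_adj hw).symm]
  · exact key t (fun w hw _ => (deleteEdges_adj_iff_of_ne htx hty).2 hw)
      fun h => (G.loopless.irrefl t h.1).elim

variable [DecidableEq V]

lemma IsColoring34.recolorable (hc : IsColoring34 G c)
    (hx : (colorNbrs G c (7 - c x) x).ncard ≤ 7 - c x)
    (hnb : ∀ w ∈ colorNbrs G c (7 - c x) x, ¬ Saturated34 G c (7 - c x) w) :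
    Recolorable34 G c x := by
  refine isColoring34_of (fun w => ?_) fun t _ => ?_
  · rcases eq_or_ne w x with rfl | hw
    · rcases hc.1 w with h | h <;> simp [h]
    · simpa [update_of_ne hw] using hc.1 w
  rcases eq_or_ne t x with rfl | ht
  · simpa [colorNbrs_update_of_not_adj (G.loopless.irrefl t)] using hx
  rw [update_of_ne ht]
  refine hc.ncard_le_of_subset_insert (a := x) (fun w ⟨hw, hcw⟩ => ?_) fun ⟨htx, hcx⟩ => ?_
  · rcases eq_or_ne w x with rfl | hwx
    · exact Or.inl rfl
    · exact Or.inr ⟨hw, by simpa [update_of_ne hwx] using hcw⟩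
  · simp only [update_self] at hcx
    exact hcx ▸ hnb t ⟨htx.symm, hcx.symm⟩

lemma IsColoring34.recolorable_of_degN_le_two (hc : IsColoring34 G c)
    (hx : (colorNbrs G c (7 - c x) x).ncard ≤ 7 - c x)
    (hlow : ∀ w ∈ colorNbrs G c (7 - c x) x, degN G w ≤ 2) : Recolorable34 G c x :=
  hc.recolorable hx fun w hw =>
    not_saturated34_of_degN_lt (by have := hc.1 x; have := hlow w hw; omega)

lemma IsColoring34.recolorable_deleteEdges (hc : IsColoring34 (G.deleteEdges {s(x, y)}) c)
    (hx : (colorNbrs (G.deleteEdges {s(x, y)}) c (7 - c x) x).ncard ≤ 7 - c x)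
    (hlow : ∀ w, G.Adj x w → w ≠ y → c w = 7 - c x → degN G w ≤ 2) :
    Recolorable34 (G.deleteEdges {s(x, y)}) c x :=
  hc.recolorable_of_degN_le_two hx fun w hw => by
    have hw' := SimpleGraph.deleteEdges_adj.1 hw.1
    exact (degN_mono (SimpleGraph.deleteEdges_le _)).trans
      (hlow w hw'.1 (by rintro rfl; exact hw'.2 rfl) hw.2)

lemma IsColoring34.extend_deleteVert (hc : IsColoring34 (deleteVert G v) c) (hv : degN G v ≤ 3)
    (hi : i = 3 ∨ i = 4) (hnb : ∀ u, G.Adj v u → ¬ Saturated34 (deleteVert G v) c i u) :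
    IsColoring34 G (update c v i) := by
  refine isColoring34_of (fun w => ?_) fun t ht => ?_
  · rcases eq_or_ne w v with rfl | hw
    · simpa using hi
    · simpa [update_of_ne hw] using hc.1 w
  have htv : t ≠ v := by rintro rfl; omega
  rw [update_of_ne htv]
  refine hc.ncard_le_of_subset_insert (a := v) (fun w ⟨hw, hcw⟩ => ?_) fun ⟨htv', hcv⟩ => ?_
  · rcases eq_or_ne w v with rfl | hwv
    · exact Or.inl rfl
    · exact Or.inr ⟨⟨hw, htv, hwv⟩, by simpa [update_of_ne hwv] using hcw⟩
  · simp only [update_self] at hcv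
    exact hcv ▸ hnb t htv'.symm

lemma colorable34_of_recolorable_deleteEdges (hxy : x ≠ y) (hcxy : c x = c y)
    (hr : Recolorable34 (G.deleteEdges {s(x, y)}) c x) : Colorable34 G := by
  have hne : update c x (7 - c x) y ≠ update c x (7 - c x) x := by
    have := hr.1 x
    simp only [update_self, update_of_ne hxy.symm] at this ⊢
    omega
  exact ⟨_, hr.of_deleteEdges (fun h => absurd h hne.symm) fun h => absurd h hne.symm⟩

lemma colorable34_of_recolorable_deleteVert (hv : ∀ w, G.Adj v w ↔ w = x ∨ w = y)
    (hr : Recolorable34 (deleteVert G v) c x) (hcy : c y ≠ c x) : Colorable34 G := by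
  have hcx := hr.1 x
  simp only [update_self] at hcx
  refine ⟨_, hr.extend_deleteVert (i := c x) (by have := degN_le_two_of_adj_iff hv; omega)
    (by omega) fun w hw hs => ?_⟩
  have hcw := hs.1
  rcases (hv w).1 hw with rfl | rfl
  · simp only [update_self] at hcw
    omega
  · rw [update_of_ne fun h : w = x => hcy (h ▸ rfl)] at hcw
    exact hcy hcw

lemma IsColoring34.swap (hc : IsColoring34 G c) (hab : G.Adj a b) (hcab : c a ≠ c b)
    (ha : (colorNbrs G c (c b) a).ncard ≤ c b + 1)
    (hla : ∀ w ∈ colorNbrs G c (c b) a, w ≠ b → degN G w ≤ 2)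
    (hb : (colorNbrs G c (c a) b).ncard ≤ c a + 1)
    (hlb : ∀ w ∈ colorNbrs G c (c a) b, w ≠ a → degN G w ≤ 2) :
    IsColoring34 G (update (update c a (7 - c a)) b (7 - c b)) := by
  have hva := hc.1 a
  have hvb := hc.1 b
  have hab' : 7 - c a = c b := by omega
  have hba' : 7 - c b = c a := by omega
  -- Recolour `a`, then `b`, inside `G − ab`, where neither sees the other.
  have hr1 : Recolorable34 (G.deleteEdges {s(a, b)}) c a := by
    refine (hc.anti (SimpleGraph.deleteEdges_le _)).recolorable_deleteEdges ?_
      fun w hw hwb hcw => hla w ⟨hw, hab' ▸ hcw⟩ hwb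
    rw [colorNbrs_deleteEdges hab.ne, hab',
      Set.ncard_sdiff_singleton_of_mem (show b ∈ colorNbrs G c (c b) a from ⟨hab, rfl⟩)]
    omega
  have hnab : ¬ (G.deleteEdges {s(a, b)}).Adj b a := fun h =>
    (SimpleGraph.deleteEdges_adj.1 h).2 (by simp [Sym2.eq_swap])
  rw [Sym2.eq_swap] at hr1 hnab
  have hr2 : Recolorable34 (G.deleteEdges {s(b, a)}) (update c a (7 - c a)) b := by
    refine hr1.recolorable_deleteEdges ?_ fun w hw hwa hcw => hlb w ⟨hw, ?_⟩ hwa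
    · rw [colorNbrs_update_of_not_adj hnab, update_of_ne hab.ne.symm, hba',
        colorNbrs_deleteEdges hab.ne.symm,
        Set.ncard_sdiff_singleton_of_mem (show a ∈ colorNbrs G c (c a) b from ⟨hab.symm, rfl⟩)]
      omega
    · simpa [update_of_ne hwa, update_of_ne hab.ne.symm, hba'] using hcw
  have hne : update (update c a (7 - c a)) b (7 - update c a (7 - c a) b) b ≠
      update (update c a (7 - c a)) b (7 - update c a (7 - c a) b) a := by
    simp only [update_self, update_of_ne hab.ne, update_of_ne hab.ne.symm]
    omega
  have hr2' := hr2.of_deleteEdges (fun h => absurd h hne) fun h => absurd h hne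
  rwa [update_of_ne hab.ne.symm] at hr2'

end Coloring

section Minimal

variable {V : Type*} [Finite V] {G : SimpleGraph V} {c : V → ℕ} {i : ℕ} {u v w x y z : V}

lemma saturated34_of_deleteEdges (hnc : ¬ Colorable34 G)
    (hc : IsColoring34 (G.deleteEdges {s(x, y)}) c) :
    c x = c y ∧ (Saturated34 (G.deleteEdges {s(x, y)}) c (c x) x ∨
      Saturated34 (G.deleteEdges {s(x, y)}) c (c y) y) := by
  by_contra h
  exact hnc ⟨c, hc.of_deleteEdges (fun hxy hx => h ⟨hxy, .inl hx⟩) fun hxy hy => h ⟨hxy, .inr hy⟩⟩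

theorem MinNonColorable34.not_adj_of_degN_le_three (hG : MinNonColorable34 G)
    (hx : degN G x ≤ 3) (hy : degN G y ≤ 3) : ¬ G.Adj x y := by
  intro hxy
  obtain ⟨c, hc⟩ := hG.2.2 s(x, y) hxy
  obtain ⟨-, hs | hs⟩ := saturated34_of_deleteEdges hG.1 hc
  · exact not_saturated34_of_degN_lt
      (by rw [degN_deleteEdges hxy]; have := hc.1 x; omega) hs
  · rw [Sym2.eq_swap] at hs
    exact not_saturated34_of_degN_lt
      (by rw [degN_deleteEdges hxy.symm]; have := hc.1 y; omega) hs

lemma colorable34_of_saturated34_deleteEdges [DecidableEq V]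
    (hc : IsColoring34 (G.deleteEdges {s(x, y)}) c) (hxy : G.Adj x y) (hcxy : c x = c y)
    (hs : Saturated34 (G.deleteEdges {s(x, y)}) c (c x) x) (hx : degN G x ≤ 8)
    (hlx : ∀ w, G.Adj x w → w ≠ y → degN G w ≤ 2) : Colorable34 G := by
  have hp := hc.ncard_colorNbrs_of_saturated34 hs
  rw [degN_deleteEdges hxy] at hp
  exact colorable34_of_recolorable_deleteEdges hxy.ne hcxy
    (hc.recolorable_deleteEdges (by omega) fun w hw hwy _ => hlx w hw hwy)

theorem MinNonColorable34.not_adj_of_degN_le_eight (hG : MinNonColorable34 G)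
    (hx : degN G x ≤ 8) (hy : degN G y ≤ 8) (hlx : ∀ w, G.Adj x w → w ≠ y → degN G w ≤ 2)
    (hly : ∀ w, G.Adj y w → w ≠ x → degN G w ≤ 2) : ¬ G.Adj x y := by
  classical
  intro hxy
  obtain ⟨c, hc⟩ := hG.2.2 s(x, y) hxy
  obtain ⟨hcxy, hs | hs⟩ := saturated34_of_deleteEdges hG.1 hc
  · exact hG.1 (colorable34_of_saturated34_deleteEdges hc hxy hcxy hs hx hlx)
  · rw [Sym2.eq_swap] at hc hs
    exact hG.1 (colorable34_of_saturated34_deleteEdges hc hxy.symm hcxy.symm hs hy hly)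

theorem MinNonColorable34.not_adj_of_degN_le_five (hG : MinNonColorable34 G)
    (hx : degN G x ≤ 5) (hy : degN G y ≤ 5) (hlx : ∀ w, G.Adj x w → w ≠ y → degN G w ≤ 2) :
    ¬ G.Adj x y := by
  classical
  intro hxy
  obtain ⟨c, hc⟩ := hG.2.2 s(x, y) hxy
  obtain ⟨hcxy, hs | hs⟩ := saturated34_of_deleteEdges hG.1 hc
  · exact hG.1 (colorable34_of_saturated34_deleteEdges hc hxy hcxy hs (by omega) hlx)
  by_cases h3 : c x = 3
  · have : (colorNbrs (G.deleteEdges {s(x, y)}) c (7 - c x) x).ncard ≤ _ :=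
      ncard_colorNbrs_le_degN
    rw [degN_deleteEdges hxy] at this
    exact hG.1 (colorable34_of_recolorable_deleteEdges hxy.ne hcxy
      (hc.recolorable_deleteEdges (by omega) fun w hw hwy _ => hlx w hw hwy))
  -- Now `c y = 4` and every other neighbour of `y` has colour 4, so `y` can take colour 3.
  rw [Sym2.eq_swap] at hc hs
  have h0 := hc.ncard_colorNbrs_of_saturated34 hs
  rw [degN_deleteEdges hxy.symm] at h0
  have hcy : c y = 4 := by have := hc.1 x; omega
  replace h0 : (colorNbrs (G.deleteEdges {s(y, x)}) c (7 - c y) y).ncard = 0 := by omega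
  have hempty := (Set.ncard_eq_zero (Set.toFinite _)).1 h0
  exact hG.1 (colorable34_of_recolorable_deleteEdges hxy.symm.ne hcxy.symm
    (hc.recolorable_of_degN_le_two (by omega) fun w hw => (hempty ▸ hw : w ∈ (∅ : Set V)).elim))

lemma saturated34_or_of_deleteVert (hnc : ¬ Colorable34 G)
    (hv : ∀ w, G.Adj v w ↔ w = x ∨ w = y) (hc : IsColoring34 (deleteVert G v) c)
    (hi : i = 3 ∨ i = 4) :
    Saturated34 (deleteVert G v) c i x ∨ Saturated34 (deleteVert G v) c i y := by
  classical
  by_contra h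
  rw [not_or] at h
  refine hnc ⟨_, hc.extend_deleteVert (by have := degN_le_two_of_adj_iff hv; omega) hi
    fun w hw => ?_⟩
  rcases (hv w).1 hw with rfl | rfl
  exacts [h.1, h.2]

lemma not_saturated34_deleteVert_of_degN_le (hnc : ¬ Colorable34 G)
    (hv : ∀ w, G.Adj v w ↔ w = x ∨ w = y) (hc : IsColoring34 (deleteVert G v) c)
    (hcx : c x ≠ i) (hy : degN G y ≤ i + 1) : ¬ Saturated34 (deleteVert G v) c i y := by
  classical
  intro hs
  have h0 := hc.ncard_colorNbrs_of_saturated34 hs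
  rw [degN_deleteVert_of_adj ((hv y).2 (.inr rfl)).symm] at h0
  obtain ⟨rfl, -⟩ := hs
  replace h0 : (colorNbrs (deleteVert G v) c (7 - c y) y).ncard = 0 := by omega
  have hempty := (Set.ncard_eq_zero (Set.toFinite _)).1 h0
  exact hnc (colorable34_of_recolorable_deleteVert (fun w => (hv w).trans or_comm)
    (hc.recolorable_of_degN_le_two (by omega) fun w hw => (hempty ▸ hw : w ∈ (∅ : Set V)).elim)
    hcx)

theorem MinNonColorable34.five_lt_degN_of_adj_iff (hG : MinNonColorable34 G)
    (hv : ∀ w, G.Adj v w ↔ w = x ∨ w = y) (hx : degN G x ≤ 5) : 5 < degN G y := by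
  by_contra! hy
  obtain ⟨c, hc⟩ := hG.2.1 v
  have hv' : ∀ w, G.Adj v w ↔ w = y ∨ w = x := fun w => (hv w).trans or_comm
  rcases saturated34_or_of_deleteVert hG.1 hv hc (i := 3) (.inl rfl) with h3 | h3 <;>
    rcases saturated34_or_of_deleteVert hG.1 hv hc (i := 4) (.inr rfl) with h4 | h4
  · exact absurd (h3.1.symm.trans h4.1) (by norm_num)
  · exact not_saturated34_deleteVert_of_degN_le hG.1 hv hc (by rw [h3.1]; norm_num) hy h4
  · exact not_saturated34_deleteVert_of_degN_le hG.1 hv' hc (by rw [h3.1]; norm_num) hx h4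
  · exact absurd (h3.1.symm.trans h4.1) (by norm_num)

lemma saturated34_of_saturated34_deleteVert (hnc : ¬ Colorable34 G)
    (hv : ∀ w, G.Adj v w ↔ w = x ∨ w = y) (hc : IsColoring34 (deleteVert G v) c)
    (hs : Saturated34 (deleteVert G v) c i x) (hcy : c y ≠ i) (hdx : degN G x ≤ 8)
    (hlow : ∀ w, G.Adj x w → w ≠ z → degN G w ≤ 2) :
    Saturated34 (deleteVert G v) c (7 - i) z := by
  classical
  have hp := hc.ncard_colorNbrs_of_saturated34 hs
  rw [degN_deleteVert_of_adj ((hv x).2 (.inl rfl)).symm] at hp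
  obtain ⟨rfl, -⟩ := hs
  by_contra hz
  refine hnc (colorable34_of_recolorable_deleteVert hv
    (hc.recolorable (by omega) fun w hw => ?_) hcy)
  rcases eq_or_ne w z with rfl | hwz
  · exact hz
  · exact not_saturated34_of_degN_lt ((degN_mono deleteVert_le).trans_lt
      (by have := hlow w hw.1.1 hwz; have := hc.1 x; omega))

lemma eq_of_saturated34_deleteVert (hnc : ¬ Colorable34 G)
    (hv : ∀ w, G.Adj v w ↔ w = x ∨ w = y) (hc : IsColoring34 (deleteVert G v) c)
    (hs : Saturated34 (deleteVert G v) c i x) (hcy : c y ≠ i) (hdx : degN G x = i + 2)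
    (hz : G.Adj x z) (hz3 : 3 ≤ degN G z) (hlow : ∀ w, G.Adj x w → w ≠ z → degN G w ≤ 2)
    (hw : G.Adj x w) (hwv : w ≠ v) (hwz : w ≠ z) : c w = i := by
  have hzs := saturated34_of_saturated34_deleteVert hnc hv hc hs hcy
    (by have := hc.1 x; have := hs.1; omega) hlow
  have hxv : x ≠ v := ((hv x).2 (.inl rfl)).ne.symm
  have hzv : z ≠ v := by
    rintro rfl
    have := degN_le_two_of_adj_iff hv
    omega
  have hp := hc.ncard_colorNbrs_of_saturated34 hs
  rw [degN_deleteVert_of_adj ((hv x).2 (.inl rfl)).symm] at hp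
  obtain ⟨rfl, -⟩ := hs
  by_contra hcw
  have h2 : 1 < (colorNbrs (deleteVert G v) c (7 - c x) x).ncard :=
    (Set.one_lt_ncard_iff (Set.toFinite _)).2 ⟨w, z,
      ⟨⟨hw, hxv, hwv⟩, by have := hc.1 w; have := hc.1 x; omega⟩, ⟨⟨hz, hxv, hzv⟩, hzs.1⟩, hwz⟩
  omega

/-- Give `v` the colour `i` and the 2-vertex `u` the colour `7 - i`: then `x` trades its
`i`-neighbour `u` for `v`, and only `z` can be blocked. -/
lemma saturated34_of_shift (hnc : ¬ Colorable34 G)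
    (hv : ∀ w, G.Adj v w ↔ w = x ∨ w = y) (hu : ∀ w, G.Adj u w ↔ w = x ∨ w = z) (huv : u ≠ v)
    (hc : IsColoring34 (deleteVert G v) c) (hcx : c x = i) (hcu : c u = i) (hcy : c y ≠ i) :
    Saturated34 (deleteVert G v) c (7 - i) z := by
  classical
  subst hcx
  by_contra hz
  have hvx : G.Adj v x := (hv x).2 (.inl rfl)
  have hux : G.Adj u x := (hu x).2 (.inl rfl)
  have hi := hc.1 x
  have hr : Recolorable34 (deleteVert G v) c u := by
    refine hc.recolorable ?_ fun w hw => ?_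
    · have h1 : (colorNbrs (deleteVert G v) c (7 - c u) u).ncard ≤ degN (deleteVert G v) u :=
        ncard_colorNbrs_le_degN
      have h2 : degN (deleteVert G v) u ≤ degN G u := degN_mono deleteVert_le
      have h3 := degN_le_two_of_adj_iff hu
      omega
    · rcases (hu w).1 hw.1.1 with rfl | rfl
      · have := hw.2; omega
      · rwa [hcu]
  refine hnc ⟨_, hr.extend_deleteVert (by have := degN_le_two_of_adj_iff hv; omega) hi
    fun w hw hs => ?_⟩
  have hcw := hs.1
  rcases (hv w).1 hw with rfl | rfl
  · have hmem : u ∈ colorNbrs (deleteVert G v) c (c w) w := ⟨⟨hux.symm, hvx.ne.symm, huv⟩, hcu⟩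
    have hs' : (colorNbrs (deleteVert G v) (update c u (7 - c u)) (c w) w).ncard = c w := hs.2
    rw [colorNbrs_update_of_ne (by omega), Set.ncard_sdiff_singleton_of_mem hmem] at hs'
    have : (colorNbrs (deleteVert G v) c (c w) w).ncard ≤ c w := hc.2 w
    omega
  · rcases eq_or_ne w u with rfl | hwu
    · simp only [update_self] at hcw
      omega
    · rw [update_of_ne hwu] at hcw
      exact hcy hcw

end Minimal

section Cycle7

variable {V : Type*} {G : SimpleGraph V} {c : V → ℕ} {u1 u2 u3 u4 u5 u6 u7 : V}

structure IsCycle7 (G : SimpleGraph V) (u1 u2 u3 u4 u5 u6 u7 : V) : Prop where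
  nodup : [u1, u2, u3, u4, u5, u6, u7].Nodup
  adj12 : G.Adj u1 u2
  adj23 : G.Adj u2 u3
  adj34 : G.Adj u3 u4
  adj45 : G.Adj u4 u5
  adj56 : G.Adj u5 u6
  adj67 : G.Adj u6 u7
  adj71 : G.Adj u7 u1

lemma IsCycle7.rotate (h : IsCycle7 G u1 u2 u3 u4 u5 u6 u7) : IsCycle7 G u2 u3 u4 u5 u6 u7 u1 :=
  ⟨(List.nodup_rotate (n := 1)).2 h.nodup, h.adj23, h.adj34, h.adj45, h.adj56, h.adj67, h.adj71,
    h.adj12⟩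

lemma IsCycle7.reverse (h : IsCycle7 G u1 u2 u3 u4 u5 u6 u7) : IsCycle7 G u1 u7 u6 u5 u4 u3 u2 :=
  ⟨(List.nodup_rotate (n := 6)).2 (List.nodup_reverse.2 h.nodup), h.adj71.symm, h.adj67.symm,
    h.adj56.symm, h.adj45.symm, h.adj34.symm, h.adj23.symm, h.adj12.symm⟩

def IsF7 (G : SimpleGraph V) (v1 v2 v3 v4 v5 v6 v7 : V) : Prop :=
  Is5s G v1 ∧ degN G v2 = 2 ∧ degN G v4 = 2 ∧ degN G v6 = 2 ∧ Is6p G v3 ∧ Is6p G v5 ∧ Is6p G v7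

def Cycle7Alternatives (G : SimpleGraph V) (u1 u2 u3 u4 u5 u6 u7 : V) : Prop :=
  {x ∈ ({u1, u2, u3, u4, u5, u6, u7} : Set V) |
      degN G x = 2 ∨ Is5p G x ∨ Is5s G x ∨ Is6p G x}.ncard ≤ 6 ∨
    2 ≤ {x ∈ ({u1, u2, u3, u4, u5, u6, u7} : Set V) | Is5s G x}.ncard ∨
    ∃ v1 v2 v3 v4 v5 v6 v7 : V,
      (([v1, v2, v3, v4, v5, v6, v7] : List V).IsRotated [u1, u2, u3, u4, u5, u6, u7] ∨
        ([v1, v2, v3, v4, v5, v6, v7] : List V).IsRotated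
          ([u1, u2, u3, u4, u5, u6, u7] : List V).reverse) ∧
      IsF7 G v1 v2 v3 v4 v5 v6 v7

lemma Cycle7Alternatives.of_rotate (h : Cycle7Alternatives G u2 u3 u4 u5 u6 u7 u1) :
    Cycle7Alternatives G u1 u2 u3 u4 u5 u6 u7 := by
  have hS : ({u2, u3, u4, u5, u6, u7, u1} : Set V) = {u1, u2, u3, u4, u5, u6, u7} := by
    ext
    simp only [Set.mem_insert_iff, Set.mem_singleton_iff]
    tauto
  unfold Cycle7Alternatives at h ⊢
  rw [hS] at h
  exact h.imp_right (Or.imp_right fun ⟨v1, v2, v3, v4, v5, v6, v7, hrot, hF⟩ =>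
    ⟨v1, v2, v3, v4, v5, v6, v7, hrot.imp (·.trans ⟨6, rfl⟩) (·.trans ⟨1, rfl⟩), hF⟩)

variable [Finite V]

lemma forall_mem_of_six_lt_ncard {P : V → Prop}
    (h : ¬ {x ∈ ({u1, u2, u3, u4, u5, u6, u7} : Set V) | P x}.ncard ≤ 6) :
    ∀ x ∈ ({u1, u2, u3, u4, u5, u6, u7} : Set V), P x := by
  classical
  set S : Set V := {u1, u2, u3, u4, u5, u6, u7}
  have hS : S.ncard ≤ 7 := by
    have : S = ↑([u1, u2, u3, u4, u5, u6, u7].toFinset) := by ext; simp [S]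
    rw [this, Set.ncard_coe_finset]
    exact List.toFinset_card_le _
  have := Set.eq_of_subset_of_ncard_le (Set.sep_subset S P) (by omega)
  intro x hx
  rw [← this] at hx
  exact hx.2

theorem MinNonColorable34.saturated34_of_cycle7 (hG : MinNonColorable34 G)
    (hC : IsCycle7 G u1 u2 u3 u4 u5 u6 u7) (h2 : degN G u2 = 2) (h3 : Is6p G u3)
    (h4 : degN G u4 = 2) (h5 : Is5p G u5) (h6 : degN G u6 = 2)
    (hc : IsColoring34 (deleteVert G u4) c) (hs3 : Saturated34 (deleteVert G u4) c 4 u3)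
    (hs5 : Saturated34 (deleteVert G u4) c 3 u5) :
    c u2 = 4 ∧ c u6 = 3 ∧ Saturated34 (deleteVert G u4) c 4 u7 ∧
      Saturated34 (deleteVert G u4) c 3 u1 := by
  have hnd := hC.nodup
  simp only [List.nodup_cons, List.mem_cons, List.not_mem_nil, or_false, not_or,
    List.nodup_nil, and_true] at hnd
  obtain ⟨⟨-, h13, -⟩, ⟨-, h24, -⟩, ⟨-, h35, -⟩, ⟨-, h46, -⟩, ⟨-, h57⟩, -⟩ := hnd
  have hv2 := adj_iff_of_degN_eq_two h2 hC.adj23 hC.adj12.symm (Ne.symm h13)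
  have hv4 := adj_iff_of_degN_eq_two h4 hC.adj34.symm hC.adj45 h35
  have hv4' := adj_iff_of_degN_eq_two h4 hC.adj45 hC.adj34.symm (Ne.symm h35)
  have hv6 := adj_iff_of_degN_eq_two h6 hC.adj56.symm hC.adj67 h57
  obtain ⟨z3, hz3, hz3d, hl3⟩ := exists_of_tpn_eq_one h3.2
  obtain ⟨z5, hz5, hz5d, hl5⟩ := exists_of_tpn_eq_one h5.2
  have hc2 : c u2 = 4 := eq_of_saturated34_deleteVert hG.1 hv4 hc hs3 (by rw [hs5.1]; norm_num)
    h3.1 hz3 hz3d hl3 hC.adj23.symm h24 (by rintro rfl; omega)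
  have hc6 : c u6 = 3 := eq_of_saturated34_deleteVert hG.1 hv4' hc hs5 (by rw [hs3.1]; norm_num)
    h5.1 hz5 hz5d hl5 hC.adj56 (Ne.symm h46) (by rintro rfl; omega)
  exact ⟨hc2, hc6, saturated34_of_shift hG.1 hv4' hv6 (Ne.symm h46) hc hs5.1 hc6
    (by rw [hs3.1]; norm_num), saturated34_of_shift hG.1 hv4 hv2 h24 hc hs3.1 hc2
    (by rw [hs5.1]; norm_num)⟩

theorem MinNonColorable34.not_saturated34_of_cycle7 (hG : MinNonColorable34 G)
    (hC : IsCycle7 G u1 u2 u3 u4 u5 u6 u7) (h1 : Is5s G u1) (h2 : degN G u2 = 2)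
    (h3 : Is6p G u3) (h4 : degN G u4 = 2) (h5 : Is5p G u5) (h6 : degN G u6 = 2) (h7 : Is6p G u7)
    (hc : IsColoring34 (deleteVert G u4) c) (hs3 : Saturated34 (deleteVert G u4) c 4 u3) :
    ¬ Saturated34 (deleteVert G u4) c 3 u5 := by
  classical
  intro hs5
  obtain ⟨hc2, hc6, hs7, hs1⟩ := hG.saturated34_of_cycle7 hC h2 h3 h4 h5 h6 hc hs3 hs5
  have hnd := hC.nodup
  simp only [List.nodup_cons, List.mem_cons, List.not_mem_nil, or_false, not_or,
    List.nodup_nil, and_true] at hnd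
  obtain ⟨⟨-, h13, h14, h15, h16, h17⟩, ⟨-, h24, -, -, h27⟩, ⟨-, h35, -, h37⟩, ⟨-, h46, h47⟩,
    ⟨-, h57⟩, h67, -⟩ := hnd
  have hv4 := adj_iff_of_degN_eq_two h4 hC.adj45 hC.adj34.symm (Ne.symm h35)
  have hv6 := adj_iff_of_degN_eq_two h6 hC.adj56.symm hC.adj67 h57
  obtain ⟨z1, hz17, hz1, hz1d, hl1⟩ :=
    exists_of_tpn_eq_two h1.2 hC.adj71.symm (by rw [h7.1]; norm_num)
  have hl7 := degN_le_two_of_tpn_eq_one h7.2 hC.adj71 (by rw [h1.1]; norm_num)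
  have hp1 : (colorNbrs (deleteVert G u4) c 4 u1).ncard ≤ degN G u1 - 3 :=
    (hc.ncard_colorNbrs_of_saturated34 hs1).trans_le
      (Nat.sub_le_sub_right (degN_mono deleteVert_le) _)
  have hp7 : (colorNbrs (deleteVert G u4) c 3 u7).ncard ≤ degN G u7 - 4 :=
    (hc.ncard_colorNbrs_of_saturated34 hs7).trans_le
      (Nat.sub_le_sub_right (degN_mono deleteVert_le) _)
  rw [h1.1] at hp1
  rw [h7.1] at hp7
  -- The 4-neighbours of `u1` are `u2` and `u7`, so its other heavy neighbour `z1` has colour 3.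
  have hcz1 : c z1 = 3 := by
    refine (hc.1 z1).resolve_right fun hz => ?_
    have : 2 < (colorNbrs (deleteVert G u4) c 4 u1).ncard :=
      (Set.two_lt_ncard_iff (Set.toFinite _)).2 ⟨u2, u7, z1, ⟨⟨hC.adj12, h14, h24⟩, hc2⟩,
        ⟨⟨hC.adj71.symm, h14, Ne.symm h47⟩, hs7.1⟩, ⟨⟨hz1, h14, by rintro rfl; omega⟩, hz⟩, h27,
        by rintro rfl; omega, Ne.symm hz17⟩
    omega
  -- Swapping the colours of `u7` and `u1` removes the obstruction to recolouring at `u6`.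
  have hsw := hc.swap (a := u7) (b := u1) ⟨hC.adj71, Ne.symm h47, h14⟩
    (by rw [hs7.1, hs1.1]; norm_num) (by rw [hs1.1]; omega)
    (fun w hw hw1 => (degN_mono deleteVert_le).trans (hl7 w hw.1.1 hw1)) (by rw [hs7.1]; omega)
    fun w hw hw7 => (degN_mono deleteVert_le).trans
      (hl1 w hw.1.1 hw7 (by rintro rfl; have := hw.2; have := hs7.1; omega))
  have hu7 := (saturated34_of_shift hG.1 hv4 hv6 (Ne.symm h46) hsw (i := 3)
    (by simp only [update_of_ne (Ne.symm h15), update_of_ne h57, hs5.1])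
    (by simp only [update_of_ne (Ne.symm h16), update_of_ne h67, hc6])
    (by simp only [update_of_ne (Ne.symm h13), update_of_ne h37, hs3.1]; norm_num)).1
  simp only [update_of_ne (Ne.symm h17), update_self, hs7.1] at hu7
  omega

theorem MinNonColorable34.not_is5p_of_cycle7 (hG : MinNonColorable34 G)
    (hC : IsCycle7 G u1 u2 u3 u4 u5 u6 u7) (h1 : Is5s G u1) (h2 : degN G u2 = 2)
    (h3 : Is6p G u3) (h4 : degN G u4 = 2) (h6 : degN G u6 = 2) (h7 : Is6p G u7) :
    ¬ Is5p G u5 := by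
  intro h5
  obtain ⟨c, hc⟩ := hG.2.1 u4
  have hv4 := adj_iff_of_degN_eq_two h4 hC.adj34.symm hC.adj45
    (by rintro rfl; exact absurd (h3.1.symm.trans h5.1) (by norm_num))
  rcases saturated34_or_of_deleteVert hG.1 hv4 hc (i := 3) (.inl rfl) with h3s | h3s <;>
    rcases saturated34_or_of_deleteVert hG.1 hv4 hc (i := 4) (.inr rfl) with h4s | h4s
  · exact absurd (h3s.1.symm.trans h4s.1) (by norm_num)
  · exact not_saturated34_deleteVert_of_degN_le hG.1 hv4 hc (by rw [h3s.1]; norm_num) h5.1.le h4s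
  · exact hG.not_saturated34_of_cycle7 hC h1 h2 h3 h4 h5 h6 h7 hc h4s h3s
  · exact absurd (h3s.1.symm.trans h4s.1) (by norm_num)

theorem MinNonColorable34.degN_eq_two_iff_of_adj {x y : V} (hG : MinNonColorable34 G)
    (hx : degN G x = 2 ∨ Is5p G x ∨ Is6p G x) (hy : degN G y = 2 ∨ Is5p G y ∨ Is6p G y)
    (hxy : G.Adj x y) : degN G x = 2 ↔ degN G y ≠ 2 := by
  refine ⟨fun h2x h2y => hG.not_adj_of_degN_le_three (by omega) (by omega) hxy, fun h2y => ?_⟩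
  by_contra h2x
  obtain ⟨tx, dx, dx'⟩ := tpn_eq_one_of_is5p_or_is6p (hx.resolve_left h2x)
  obtain ⟨ty, dy, dy'⟩ := tpn_eq_one_of_is5p_or_is6p (hy.resolve_left h2y)
  exact hG.not_adj_of_degN_le_eight (by omega) (by omega)
    (degN_le_two_of_tpn_eq_one tx hxy (by omega))
    (degN_le_two_of_tpn_eq_one ty hxy.symm (by omega)) hxy

theorem MinNonColorable34.isF7 (hG : MinNonColorable34 G) (hC : IsCycle7 G u1 u2 u3 u4 u5 u6 u7)
    (h1 : Is5s G u1) (h2 : degN G u2 = 2) (h4 : degN G u4 = 2) (h6 : degN G u6 = 2)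
    (h3 : Is5p G u3 ∨ Is6p G u3) (h5 : Is5p G u5 ∨ Is6p G u5) (h7 : Is5p G u7 ∨ Is6p G u7) :
    IsF7 G u1 u2 u3 u4 u5 u6 u7 := by
  have h13 : u1 ≠ u3 := fun h => by have := hC.nodup; simp [h] at this
  have h3' : Is6p G u3 := h3.resolve_left fun h => by
    have := hG.five_lt_degN_of_adj_iff (adj_iff_of_degN_eq_two h2 hC.adj12.symm hC.adj23 h13)
      h1.1.le
    have := h.1
    omega
  have h7' : Is6p G u7 := h7.resolve_left fun h => hG.not_adj_of_degN_le_five h.1.le h1.1.le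
    (degN_le_two_of_tpn_eq_one h.2 hC.adj71 (by rw [h1.1]; norm_num)) hC.adj71
  exact ⟨h1, h2, h4, h6, h3', h5.resolve_left (hG.not_is5p_of_cycle7 hC h1 h2 h3' h4 h6 h7'), h7'⟩

theorem MinNonColorable34.cycle7Alternatives_of_is5s (hG : MinNonColorable34 G)
    (hC : IsCycle7 G u1 u2 u3 u4 u5 u6 u7) (h1 : Is5s G u1) :
    Cycle7Alternatives G u1 u2 u3 u4 u5 u6 u7 := by
  unfold Cycle7Alternatives
  refine or_iff_not_imp_left.2 fun ha => or_iff_not_imp_left.2 fun hb => ?_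
  have hlight := forall_mem_of_six_lt_ncard ha
  have huniq := (Set.ncard_le_one (Set.toFinite _)).1 (Nat.le_of_lt_succ (not_le.1 hb))
  have hL : ∀ x ∈ [u2, u3, u4, u5, u6, u7], degN G x = 2 ∨ Is5p G x ∨ Is6p G x := by
    intro x hx
    have hxS : x ∈ ({u1, u2, u3, u4, u5, u6, u7} : Set V) := by simp at hx ⊢; tauto
    have hx1 : x ≠ u1 := by rintro rfl; exact (List.nodup_cons.1 hC.nodup).1 hx
    rcases hlight x hxS with h | h | h | h
    exacts [.inl h, .inr (.inl h), (hx1 (huniq x ⟨hxS, h⟩ u1 ⟨by simp, h1⟩)).elim, .inr (.inr h)]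
  simp only [List.mem_cons, List.not_mem_nil, or_false, forall_eq_or_imp, forall_eq] at hL
  obtain ⟨l2, l3, l4, l5, l6, l7⟩ := hL
  have e23 := hG.degN_eq_two_iff_of_adj l2 l3 hC.adj23
  have e34 := hG.degN_eq_two_iff_of_adj l3 l4 hC.adj34
  have e45 := hG.degN_eq_two_iff_of_adj l4 l5 hC.adj45
  have e56 := hG.degN_eq_two_iff_of_adj l5 l6 hC.adj56
  have e67 := hG.degN_eq_two_iff_of_adj l6 l7 hC.adj67
  by_cases d2 : degN G u2 = 2
  · have n3 := e23.1 d2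
    have d4 := not_not.1 (mt e34.2 n3)
    have n5 := e45.1 d4
    have d6 := not_not.1 (mt e56.2 n5)
    exact ⟨u1, u2, u3, u4, u5, u6, u7, .inl (List.IsRotated.refl _), hG.isF7 hC h1 d2 d4 d6
      (l3.resolve_left n3) (l5.resolve_left n5) (l7.resolve_left (e67.1 d6))⟩
  · have d3 := not_not.1 (mt e23.2 d2)
    have n4 := e34.1 d3
    have d5 := not_not.1 (mt e45.2 n4)
    have n6 := e56.1 d5
    exact ⟨u1, u7, u6, u5, u4, u3, u2, .inr ⟨1, rfl⟩, hG.isF7 hC.reverse h1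
      (not_not.1 (mt e67.2 n6)) d5 d3 (l6.resolve_left n6) (l4.resolve_left n4)
      (l2.resolve_left d2)⟩

theorem MinNonColorable34.cycle7Alternatives_of_forall_not_is5s (hG : MinNonColorable34 G)
    (hC : IsCycle7 G u1 u2 u3 u4 u5 u6 u7)
    (h5 : ∀ x ∈ [u1, u2, u3, u4, u5, u6, u7], ¬ Is5s G x) :
    Cycle7Alternatives G u1 u2 u3 u4 u5 u6 u7 := by
  refine .inl (not_not.1 fun ha => ?_)
  have hlight := forall_mem_of_six_lt_ncard ha
  have hL : ∀ x ∈ [u1, u2, u3, u4, u5, u6, u7], degN G x = 2 ∨ Is5p G x ∨ Is6p G x := by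
    intro x hx
    rcases hlight x (by simpa using hx) with h | h | h | h
    exacts [.inl h, .inr (.inl h), (h5 x hx h).elim, .inr (.inr h)]
  simp only [List.mem_cons, List.not_mem_nil, or_false, forall_eq_or_imp, forall_eq] at hL
  obtain ⟨l1, l2, l3, l4, l5, l6, l7⟩ := hL
  have e12 := hG.degN_eq_two_iff_of_adj l1 l2 hC.adj12
  have e23 := hG.degN_eq_two_iff_of_adj l2 l3 hC.adj23
  have e34 := hG.degN_eq_two_iff_of_adj l3 l4 hC.adj34
  have e45 := hG.degN_eq_two_iff_of_adj l4 l5 hC.adj45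
  have e56 := hG.degN_eq_two_iff_of_adj l5 l6 hC.adj56
  have e67 := hG.degN_eq_two_iff_of_adj l6 l7 hC.adj67
  have e71 := hG.degN_eq_two_iff_of_adj l7 l1 hC.adj71
  by_cases d1 : degN G u1 = 2
  · have d3 := not_not.1 (mt e23.2 (e12.1 d1))
    have d5 := not_not.1 (mt e45.2 (e34.1 d3))
    have d7 := not_not.1 (mt e67.2 (e56.1 d5))
    exact e71.1 d7 d1
  · have d2 := not_not.1 (mt e12.2 d1)
    have d4 := not_not.1 (mt e34.2 (e23.1 d2))
    have d6 := not_not.1 (mt e56.2 (e45.1 d4))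
    exact e67.1 d6 (e71.2 d1)

end Cycle7

theorem stmt_19_general {V : Type*} [Fintype V] (G : SimpleGraph V)
    (hG : MinNonColorable34 G)
    (u1 u2 u3 u4 u5 u6 u7 : V)
    (hnd : ([u1, u2, u3, u4, u5, u6, u7] : List V).Nodup)
    (a12 : G.Adj u1 u2) (a23 : G.Adj u2 u3) (a34 : G.Adj u3 u4)
    (a45 : G.Adj u4 u5) (a56 : G.Adj u5 u6) (a67 : G.Adj u6 u7)
    (a71 : G.Adj u7 u1) :
    {x ∈ ({u1, u2, u3, u4, u5, u6, u7} : Set V) |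
        degN G x = 2 ∨ Is5p G x ∨ Is5s G x ∨ Is6p G x}.ncard ≤ 6 ∨
      2 ≤ {x ∈ ({u1, u2, u3, u4, u5, u6, u7} : Set V) | Is5s G x}.ncard ∨
      ∃ v1 v2 v3 v4 v5 v6 v7 : V,
        (([v1, v2, v3, v4, v5, v6, v7] : List V).IsRotated
            [u1, u2, u3, u4, u5, u6, u7] ∨
          ([v1, v2, v3, v4, v5, v6, v7] : List V).IsRotated
            ([u1, u2, u3, u4, u5, u6, u7] : List V).reverse) ∧
        Is5s G v1 ∧ degN G v2 = 2 ∧ degN G v4 = 2 ∧ degN G v6 = 2 ∧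
        Is6p G v3 ∧ Is6p G v5 ∧ Is6p G v7 := by
  have hC : IsCycle7 G u1 u2 u3 u4 u5 u6 u7 := ⟨hnd, a12, a23, a34, a45, a56, a67, a71⟩
  show Cycle7Alternatives G u1 u2 u3 u4 u5 u6 u7
  by_cases h5 : ∃ x ∈ [u1, u2, u3, u4, u5, u6, u7], Is5s G x
  · obtain ⟨x, hx, h5x⟩ := h5
    simp only [List.mem_cons, List.not_mem_nil, or_false] at hx
    rcases hx with rfl | rfl | rfl | rfl | rfl | rfl | rfl
    · exact hG.cycle7Alternatives_of_is5s hC h5x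
    · exact .of_rotate (hG.cycle7Alternatives_of_is5s hC.rotate h5x)
    · exact .of_rotate <| .of_rotate <| hG.cycle7Alternatives_of_is5s hC.rotate.rotate h5x
    · exact .of_rotate <| .of_rotate <| .of_rotate <|
        hG.cycle7Alternatives_of_is5s hC.rotate.rotate.rotate h5x
    · exact .of_rotate <| .of_rotate <| .of_rotate <| .of_rotate <|
        hG.cycle7Alternatives_of_is5s hC.rotate.rotate.rotate.rotate h5x
    · exact .of_rotate <| .of_rotate <| .of_rotate <| .of_rotate <| .of_rotate <|
        hG.cycle7Alternatives_of_is5s hC.rotate.rotate.rotate.rotate.rotate h5x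
    · exact .of_rotate <| .of_rotate <| .of_rotate <| .of_rotate <| .of_rotate <| .of_rotate <|
        hG.cycle7Alternatives_of_is5s hC.rotate.rotate.rotate.rotate.rotate.rotate h5x
  · push Not at h5
    exact hG.cycle7Alternatives_of_forall_not_is5s hC h5

/-- In a minimally non-(3,4)-colorable graph of girth at least 5,
every 7-cycle `u₁…u₇` satisfies at least one of: (a) at most six of its vertices
are 2-, 5p-, 5s-, or 6p-vertices; (b) at least two of its vertices are
5s-vertices; (c) up to rotation or reflection, position 1 is a 5s-vertex,
positions 2, 4, 6 are 2-vertices, and positions 3, 5, 7 are 6p-vertices (the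
special face `F₇`). -/
theorem stmt_19 {V : Type*} [Fintype V] (G : SimpleGraph V)
    (hG : MinNonColorable34 G) (hgirth : GirthAtLeast5 G)
    (u1 u2 u3 u4 u5 u6 u7 : V)
    (hnd : ([u1, u2, u3, u4, u5, u6, u7] : List V).Nodup)
    (a12 : G.Adj u1 u2) (a23 : G.Adj u2 u3) (a34 : G.Adj u3 u4)
    (a45 : G.Adj u4 u5) (a56 : G.Adj u5 u6) (a67 : G.Adj u6 u7)
    (a71 : G.Adj u7 u1) :
    {x ∈ ({u1, u2, u3, u4, u5, u6, u7} : Set V) |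
        degN G x = 2 ∨ Is5p G x ∨ Is5s G x ∨ Is6p G x}.ncard ≤ 6 ∨
      2 ≤ {x ∈ ({u1, u2, u3, u4, u5, u6, u7} : Set V) | Is5s G x}.ncard ∨
      ∃ v1 v2 v3 v4 v5 v6 v7 : V,
        (([v1, v2, v3, v4, v5, v6, v7] : List V).IsRotated
            [u1, u2, u3, u4, u5, u6, u7] ∨
          ([v1, v2, v3, v4, v5, v6, v7] : List V).IsRotated
            ([u1, u2, u3, u4, u5, u6, u7] : List V).reverse) ∧
        Is5s G v1 ∧ degN G v2 = 2 ∧ degN G v4 = 2 ∧ degN G v6 = 2 ∧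
        Is6p G v3 ∧ Is6p G v5 ∧ Is6p G v7 :=
  stmt_19_general G hG u1 u2 u3 u4 u5 u6 u7 hnd a12 a23 a34 a45 a56 a67 a71
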